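/- arXiv:2301.06019 — 6 statements merged into one kernel-verified Lean document; each statement's English description precedes it below -/
import Mathlib

section
/- Let q be a prime power. For every function φ : ℙ²(F_q) → ℙ¹(F_q), there exist homogeneous polynomials F, G ∈ F_q[x,y,z] of degree 3(q−1) with no common zero v ≠ 0 in F_q³, such that for every nonzero v ∈ F_q³ and every [s:t] ∈ ℙ¹(F_q), one has sF(v) + tG(v) = 0 if and only if φ([v]) = [s:t]. In particular, every partition of ℙ²(F_q) into q+1 (possibly empty) sets indexed by ℙ¹(F_q) is induced by a pencil of plane curves with no F_q-points in its base locus. -/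
open MvPolynomial

/-- The `F_q`-line in `ℙ²(F_q)` with (dual) coefficient vector `a`. -/
def projLine (F : Type*) [Field F] (a : Fin 3 → F) :
    Set (Projectivization F (Fin 3 → F)) :=
  {P | ∑ i, a i * P.rep i = 0}

/-- A set of points of `ℙ²(F_q)` is a blocking set if it meets every `F_q`-line. -/
def IsBlockingSet (F : Type*) [Field F] (B : Set (Projectivization F (Fin 3 → F))) : Prop :=
  ∀ a : Fin 3 → F, a ≠ 0 → (B ∩ projLine F a).Nonempty

/-- The set of `F_q`-points of the member of the pencil `⟨P₁, P₂⟩` at `[s:t] ∈ ℙ¹(F_q)`. -/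
def pencilMember (F : Type*) [Field F] (P₁ P₂ : MvPolynomial (Fin 3) F)
    (st : Projectivization F (Fin 2 → F)) :
    Set (Projectivization F (Fin 3 → F)) :=
  {P | st.rep 0 * eval P.rep P₁ + st.rep 1 * eval P.rep P₂ = 0}

/-!
For a point `[w]` of `ℙ(F^ι)` with `w i ≠ 0`, the form
`X i ^ (q-1) * ∏_{j ≠ i} (X i ^ (q-1) - (w i X j - w j X i) ^ (q-1))` of degree `|ι| (q-1)`
takes the value `1` on the representatives of `[w]` and `0` on every other nonzero vector, since
`a ^ (q-1)` is the indicator of `a ≠ 0` in `F_q`. Linear combinations of these forms therefore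
represent every function `ℙ(F^ι) → F`. Taking the two coordinates `(b₁, -b₀)` of a representative
`(b₀, b₁)` of `φ [v]` as the values of `P₁, P₂` at `v`, the member `[s:t]` passes through `[v]`
iff `s b₁ - t b₀ = 0`, i.e. iff `[s:t] = [b₀:b₁]`.
-/

open Finset
open scoped LinearAlgebra.Projectivization

namespace Projectivization

theorem eq_iff_rep_det_eq_zero {F : Type*} [Field F] (p p' : ℙ F (Fin 2 → F)) :
    p = p' ↔ p.rep 0 * p'.rep 1 - p.rep 1 * p'.rep 0 = 0 := by
  conv_lhs => rw [← p.mk_rep, ← p'.mk_rep]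
  rw [← not_iff_not, ← ne_eq, ← independent_pair_iff_ne, independent_mk_iff_LinearIndependent,
    show ![p.rep, p'.rep] = (Matrix.of ![p.rep, p'.rep]).row from rfl,
    Matrix.linearIndependent_rows_iff_isUnit, Matrix.isUnit_iff_isUnit_det, isUnit_iff_ne_zero,
    Matrix.det_fin_two]
  simp

theorem mk_eq_mk_iff_minors_eq_zero {F ι : Type*} [Field F] {w v : ι → F} {i : ι} (hw : w ≠ 0)
    (hv : v ≠ 0) (hwi : w i ≠ 0) :
    mk F v hv = mk F w hw ↔ v i ≠ 0 ∧ ∀ j, w i * v j - w j * v i = 0 := by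
  rw [mk_eq_mk_iff']
  constructor
  · rintro ⟨c, rfl⟩
    refine ⟨mul_ne_zero (left_ne_zero_of_smul hv) hwi, fun j ↦ ?_⟩
    simp only [Pi.smul_apply, smul_eq_mul]
    ring
  · rintro ⟨hvi, hminor⟩
    refine ⟨v i / w i, funext fun j ↦ ?_⟩
    simp only [Pi.smul_apply, smul_eq_mul]
    field_simp
    linear_combination -hminor j

end Projectivization

section

variable {F ι : Type*} [Field F] [Fintype F] [Fintype ι]

local notation "q" => Fintype.card F

section

variable [DecidableEq ι]

noncomputable def pointIndicator (w : ι → F) (i : ι) : MvPolynomial ι F :=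
  X i ^ (q - 1) * ∏ j ∈ univ.erase i, (X i ^ (q - 1) - (C (w i) * X j - C (w j) * X i) ^ (q - 1))

theorem isHomogeneous_pointIndicator (w : ι → F) (i : ι) :
    (pointIndicator w i).IsHomogeneous (Fintype.card ι * (q - 1)) := by
  have hXi : (X i ^ (q - 1) : MvPolynomial ι F).IsHomogeneous (q - 1) := by
    simpa using (isHomogeneous_X F i).pow (q - 1)
  have hminor (j : ι) :
      ((C (w i) * X j - C (w j) * X i : MvPolynomial ι F) ^ (q - 1)).IsHomogeneous (q - 1) := by
    simpa using (((isHomogeneous_C _ _).mul (isHomogeneous_X F j)).sub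
      ((isHomogeneous_C _ _).mul (isHomogeneous_X F i))).pow (q - 1)
  convert hXi.mul (IsHomogeneous.prod _ _ (fun _ ↦ q - 1) fun j _ ↦ hXi.sub (hminor j)) using 1
  · rfl
  have : Nonempty ι := ⟨i⟩
  obtain ⟨n, hn⟩ := Nat.exists_eq_add_one_of_ne_zero (Fintype.card_ne_zero (α := ι))
  rw [sum_const, card_erase_of_mem (mem_univ i), card_univ, smul_eq_mul, hn, Nat.add_sub_cancel]
  ring

open Classical in
theorem eval_pointIndicator {w : ι → F} {i : ι} (hw : w ≠ 0) (hwi : w i ≠ 0) (v : ι → F)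
    (hv : v ≠ 0) :
    eval v (pointIndicator w i) =
      if Projectivization.mk F v hv = Projectivization.mk F w hw then 1 else 0 := by
  have hq : q - 1 ≠ 0 := Nat.sub_ne_zero_of_lt Fintype.one_lt_card
  simp only [pointIndicator, map_mul, map_prod, map_sub, map_pow, eval_X, eval_C]
  split_ifs with h
  · obtain ⟨hvi, hminor⟩ := (Projectivization.mk_eq_mk_iff_minors_eq_zero hw hv hwi).1 h
    simp [hminor, FiniteField.pow_card_sub_one_eq_one _ hvi, hq]
  by_cases hvi : v i = 0
  · simp [hvi, hq]
  obtain ⟨j, hj⟩ := not_forall.1 fun hminor ↦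
    h ((Projectivization.mk_eq_mk_iff_minors_eq_zero hw hv hwi).2 ⟨hvi, hminor⟩)
  have hji : j ≠ i := by rintro rfl; exact hj (by ring)
  refine mul_eq_zero_of_right _ (prod_eq_zero (mem_erase.2 ⟨hji, mem_univ j⟩) ?_)
  rw [FiniteField.pow_card_sub_one_eq_one _ hj, FiniteField.pow_card_sub_one_eq_one _ hvi, sub_self]

end

theorem exists_isHomogeneous_eval_eq (g : ℙ F (ι → F) → F) :
    ∃ P : MvPolynomial ι F, P.IsHomogeneous (Fintype.card ι * (q - 1)) ∧
      ∀ v (hv : v ≠ 0), eval v P = g (Projectivization.mk F v hv) := by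
  classical
  have := Fintype.ofFinite (ℙ F (ι → F))
  choose idx hidx using fun p : ℙ F (ι → F) ↦ Function.ne_iff.1 p.rep_nonzero
  refine ⟨∑ p, C (g p) * pointIndicator p.rep (idx p),
    IsHomogeneous.sum _ _ _ fun p _ ↦ (isHomogeneous_pointIndicator _ _).C_mul _, fun v hv ↦ ?_⟩
  have hδ (p : ℙ F (ι → F)) :
      eval v (pointIndicator p.rep (idx p)) = if Projectivization.mk F v hv = p then 1 else 0 := by
    rw [eval_pointIndicator p.rep_nonzero (hidx p), p.mk_rep]
  simp [hδ]

end

/-- **Proposition 2.1.** Every partition of `ℙ²(F_q)` indexed by `ℙ¹(F_q)` (encoded by a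
function `φ : ℙ²(F_q) → ℙ¹(F_q)`) is induced by a pencil of plane curves of degree `3(q-1)`
with no `F_q`-points in its base locus. -/
theorem stmt_2 (F : Type*) [Field F] [Fintype F]
    (φ : Projectivization F (Fin 3 → F) → Projectivization F (Fin 2 → F)) :
    ∃ P₁ P₂ : MvPolynomial (Fin 3) F,
      P₁.IsHomogeneous (3 * (Fintype.card F - 1)) ∧
      P₂.IsHomogeneous (3 * (Fintype.card F - 1)) ∧
      (∀ v : Fin 3 → F, v ≠ 0 → ¬(eval v P₁ = 0 ∧ eval v P₂ = 0)) ∧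
      ∀ (v : Fin 3 → F) (hv : v ≠ 0) (st : Projectivization F (Fin 2 → F)),
        (st.rep 0 * eval v P₁ + st.rep 1 * eval v P₂ = 0 ↔
          φ (Projectivization.mk F v hv) = st) := by
  obtain ⟨P₁, hP₁, hP₁v⟩ := exists_isHomogeneous_eval_eq fun p ↦ (φ p).rep 1
  obtain ⟨P₂, hP₂, hP₂v⟩ := exists_isHomogeneous_eval_eq fun p ↦ -(φ p).rep 0
  rw [Fintype.card_fin] at hP₁ hP₂
  refine ⟨P₁, P₂, hP₁, hP₂, fun v hv ⟨h₁, h₂⟩ ↦ ?_, fun v hv st ↦ ?_⟩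
  · rw [hP₁v v hv] at h₁
    rw [hP₂v v hv, neg_eq_zero] at h₂
    exact (φ _).rep_nonzero (funext fun i ↦ by fin_cases i <;> assumption)
  · rw [hP₁v v hv, hP₂v v hv, Projectivization.eq_iff_rep_det_eq_zero, ← neg_eq_zero]
    ring_nf
end

section
/- Let q be a prime power. For every point Q ∈ ℙ²(F_q), there exists a homogeneous polynomial S ∈ F_q[x,y,z] of degree 3(q−1) such that for every nonzero vector v ∈ F_q³: S(v) = 1 if [v] = Q, and S(v) = 0 if [v] ≠ Q. -/
/-!
Move `Q` to the coordinate point `[1 : 0 : 0]` by a linear automorphism. Over `F_q` the power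
`a ^ (q - 1)` is `0` or `1` according as `a = 0` or not, so the form
`x₀ ^ (q - 1) * ∏_{i ≠ 0} (x₀ ^ (q - 1) - xᵢ ^ (q - 1))` vanishes unless `x₀ ≠ 0`, and then equals
`∏_{i ≠ 0} (1 - xᵢ ^ (q - 1))`, which is `1` exactly when all other coordinates vanish.
Substituting linear forms for the variables keeps the form homogeneous of the same degree.
-/

open MvPolynomial

lemma FiniteField.pow_card_sub_one_eq_ite {F : Type*} [Field F] [Fintype F] [DecidableEq F]
    (a : F) : a ^ (Fintype.card F - 1) = if a = 0 then 0 else 1 := by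
  split_ifs with ha
  · rw [ha, zero_pow (Nat.sub_ne_zero_of_lt Fintype.one_lt_card)]
  · exact FiniteField.pow_card_sub_one_eq_one a ha

namespace MvPolynomial

lemma eval_bind₁_toMvPolynomial_toMatrix' {R ι : Type*} [CommSemiring R] [Fintype ι]
    [DecidableEq ι] (φ : (ι → R) →ₗ[R] ι → R) (p : MvPolynomial ι R) (v : ι → R) :
    eval v (bind₁ (LinearMap.toMatrix' φ).toMvPolynomial p) = eval (φ v) p := by
  rw [eval, eval₂Hom_bind₁]
  simp only [← eval.eq_1, Matrix.toMvPolynomial_eval_eq_apply, LinearMap.toMatrix'_mulVec]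

variable (F) {ι : Type*} [Field F] [Fintype F] [Fintype ι] [DecidableEq ι]

noncomputable def coordinatePointIndicator (i₀ : ι) : MvPolynomial ι F :=
  X i₀ ^ (Fintype.card F - 1) *
    ∏ i ∈ Finset.univ.erase i₀, (X i₀ ^ (Fintype.card F - 1) - X i ^ (Fintype.card F - 1))

lemma isHomogeneous_coordinatePointIndicator (i₀ : ι) :
    (coordinatePointIndicator F i₀).IsHomogeneous (Fintype.card ι * (Fintype.card F - 1)) := by
  have hX : ∀ i, (X i ^ (Fintype.card F - 1) : MvPolynomial ι F).IsHomogeneous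
      (Fintype.card F - 1) := fun i ↦ isHomogeneous_X_pow i _
  have hprod := IsHomogeneous.prod (Finset.univ.erase i₀) _ _ fun i _ ↦ (hX i₀).sub (hX i)
  have hcard : Fintype.card ι = 1 + (Finset.univ.erase i₀).card := by
    rw [Finset.card_erase_of_mem (Finset.mem_univ _), Finset.card_univ]
    have := Fintype.card_pos_iff.2 ⟨i₀⟩
    omega
  rw [Finset.sum_const, smul_eq_mul] at hprod
  rw [hcard, add_mul, one_mul]
  exact (hX i₀).mul hprod

variable {F}

lemma eval_coordinatePointIndicator [DecidableEq F] (i₀ : ι) (u : ι → F) :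
    eval u (coordinatePointIndicator F i₀) = if u i₀ ≠ 0 ∧ ∀ i ≠ i₀, u i = 0 then 1 else 0 := by
  simp only [coordinatePointIndicator, map_mul, map_prod, map_sub, map_pow, eval_X,
    FiniteField.pow_card_sub_one_eq_ite]
  by_cases h₀ : u i₀ = 0
  · simp [h₀]
  · have h_one_sub : ∀ i, (1 - if u i = 0 then 0 else 1 : F) = if u i = 0 then 1 else 0 := by
      intro i; split_ifs <;> simp
    simp only [h₀, if_false, one_mul, h_one_sub, Finset.prod_boole, Finset.mem_erase,
      Finset.mem_univ, and_true]
    simp [h₀]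

end MvPolynomial

namespace Projectivization

open scoped LinearAlgebra.Projectivization

lemma mk_eq_mk_single_iff {K ι : Type*} [DivisionRing K] [DecidableEq ι] {u : ι → K}
    (hu : u ≠ 0) (i₀ : ι) :
    mk K u hu = mk K (Pi.single i₀ 1) (by simp) ↔ u i₀ ≠ 0 ∧ ∀ i ≠ i₀, u i = 0 := by
  rw [mk_eq_mk_iff']
  constructor
  · rintro ⟨a, rfl⟩
    refine ⟨fun h ↦ hu ?_, fun i hi ↦ by simp [hi]⟩
    simp_all
  · rintro ⟨-, h⟩
    refine ⟨u i₀, funext fun i ↦ ?_⟩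
    by_cases hi : i = i₀
    · subst hi; simp
    · simp [hi, h i hi]

open Classical in
theorem exists_isHomogeneous_eval_eq_indicator {F ι : Type*} [Field F] [Fintype F] [Fintype ι]
    (Q : ℙ F (ι → F)) (i₀ : ι) :
    ∃ S : MvPolynomial ι F, S.IsHomogeneous (Fintype.card ι * (Fintype.card F - 1)) ∧
      ∀ (v : ι → F) (hv : v ≠ 0), eval v S = if mk F v hv = Q then 1 else 0 := by
  have he : (Pi.single i₀ 1 : ι → F) ≠ 0 := by simp
  have : MulAction.IsPretransitive ((ι → F) ≃ₗ[F] ι → F) (ℙ F (ι → F)) :=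
    MulAction.isPretransitive_of_is_two_pretransitive
  obtain ⟨φ, hφ⟩ := MulAction.exists_smul_eq ((ι → F) ≃ₗ[F] ι → F) Q (mk F _ he)
  refine ⟨bind₁ (LinearMap.toMatrix' φ.toLinearMap).toMvPolynomial
    (coordinatePointIndicator F i₀), ?_, fun v hv ↦ ?_⟩
  · have := (isHomogeneous_coordinatePointIndicator F i₀).aeval _
      (Matrix.toMvPolynomial_isHomogeneous (LinearMap.toMatrix' φ.toLinearMap))
    rwa [one_mul] at this
  · rw [eval_bind₁_toMvPolynomial_toMatrix', LinearEquiv.coe_coe, eval_coordinatePointIndicator]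
    refine if_congr ?_ rfl rfl
    rw [← mk_eq_mk_single_iff (φ.map_ne_zero_iff.2 hv), ← hφ]
    exact (smul_left_cancel_iff φ : φ • mk F v hv = φ • Q ↔ _)

end Projectivization

/-- **Lemma 2.2 (interpolation).** For every point `Q ∈ ℙ²(F_q)` there is a homogeneous
polynomial `S` of degree `3(q-1)` with `S(v) = 1` whenever `[v] = Q` and `S(v) = 0` for all
other nonzero `v`. -/
theorem stmt_3 (F : Type*) [Field F] [Fintype F]
    (Q : Projectivization F (Fin 3 → F)) :
    ∃ S : MvPolynomial (Fin 3) F,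
      S.IsHomogeneous (3 * (Fintype.card F - 1)) ∧
      ∀ (v : Fin 3 → F) (hv : v ≠ 0),
        (Projectivization.mk F v hv = Q → eval v S = 1) ∧
        (Projectivization.mk F v hv ≠ Q → eval v S = 0) := by
  obtain ⟨S, hS, hSv⟩ := Q.exists_isHomogeneous_eval_eq_indicator 0
  refine ⟨S, by simpa using hS, fun v hv ↦ ⟨fun h ↦ ?_, fun h ↦ ?_⟩⟩ <;> simp [hSv v hv, h]
end

section
/- Let q be a prime power and let F, G ∈ F_q[x,y,z] be two homogeneous polynomials of the same degree with no common zero v ≠ 0 in F_q³. Then there exists [s:t] ∈ ℙ¹(F_q) such that the set C_{[s:t]}(F_q) = {[v] ∈ ℙ²(F_q) : sF(v)+tG(v)=0} has at most q elements, and consequently C_{[s:t]}(F_q) is not a blocking set. -/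
/-!
The map `P ↦ [P₂(P) : -P₁(P)]` from `ℙ²(F_q)` to `ℙ¹(F_q)` is defined everywhere because the pencil
has no rational base points, and its fibres are the sets of rational points of the members of the
pencil. Since `q² + q + 1 < (q + 1)²`, some fibre has at most `q` points. Such a set `S` is not
blocking: for `p ∉ S`, every point of `S` lies on exactly one of the `q + 1` lines through `p`, so
some line through `p` misses `S`.
-/

open MvPolynomial

open Projectivization
open scoped LinearAlgebra.Projectivization

namespace Projectivization

variable {F : Type*} [Field F]

lemma mk_eq_mk_iff_mul_eq_mul {v w : Fin 2 → F} (hv : v ≠ 0) (hw : w ≠ 0) :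
    mk F v hv = mk F w hw ↔ v 0 * w 1 = v 1 * w 0 := by
  rw [← not_iff_not, ← ne_eq, ← independent_pair_iff_ne, independent_mk_iff_LinearIndependent,
    ← ne_eq, ← sub_ne_zero, show ![v, w] = (Matrix.of ![v, w]).row from rfl,
    Matrix.linearIndependent_rows_iff_isUnit, Matrix.isUnit_iff_isUnit_det, Matrix.det_fin_two,
    isUnit_iff_ne_zero]
  simp

lemma eq_cross_of_orthogonal [DecidableEq F] {u v w : ℙ F (Fin 3 → F)} (hvw : v ≠ w)
    (hv : u.orthogonal v) (hw : u.orthogonal w) : u = cross v w := by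
  induction u with | h u hu =>
  induction v with | h v hv' =>
  induction w with | h w hw' =>
  rw [orthogonal_mk] at hv hw
  rw [cross_mk_of_ne hv' hw' hvw, mk_eq_mk_iff_crossProduct_eq_zero,
    cross_cross_eq_smul_sub_smul', hw, dotProduct_comm, hv, zero_smul, zero_smul, sub_zero]

variable [Fintype F]

lemma card_fin_two_fun : Nat.card (ℙ F (Fin 2 → F)) = Fintype.card F + 1 := by
  rw [card_of_finrank_two F _ (Module.finrank_fin_fun F), Nat.card_eq_fintype_card]

lemma card_fin_three_fun :
    Nat.card (ℙ F (Fin 3 → F)) = Fintype.card F ^ 2 + Fintype.card F + 1 := by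
  rw [card_of_finrank F _ (Module.finrank_fin_fun F), Nat.card_eq_fintype_card]
  simp only [Finset.sum_range_succ, Finset.range_one, Finset.sum_singleton, pow_zero, pow_one]
  ring

lemma le_ncard_setOf_orthogonal (p : ℙ F (Fin 3 → F)) :
    Fintype.card F + 1 ≤ {ℓ : ℙ F (Fin 3 → F) | ℓ.orthogonal p}.ncard := by
  induction p with | h p hp =>
  set W := LinearMap.ker (dotProductEquiv F (Fin 3) p)
  have hW : Module.finrank F W = 2 := by
    have := (dotProductEquiv F (Fin 3) p).finrank_ker_add_one_of_ne_zero
      ((LinearEquiv.map_ne_zero_iff _).2 hp)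
    rw [Module.finrank_fin_fun] at this
    exact Nat.add_right_cancel this
  rw [← Nat.card_eq_fintype_card, ← card_of_finrank_two F W hW, ← Nat.card_coe_set_eq]
  refine Nat.card_le_card_of_injective
    (fun x => ⟨map W.subtype W.subtype_injective x, ?_⟩) fun x y h => ?_
  · induction x with | h x hx =>
    rw [map_mk, Set.mem_ofPred_eq, orthogonal_mk, dotProduct_comm]
    exact x.2
  · exact map_injective _ W.subtype_injective (congrArg Subtype.val h)

end Projectivization

lemma Finite.exists_ncard_preimage_lt_of_card_lt_mul {α β : Type*} [Finite α] [Finite β]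
    (f : α → β) {n : ℕ} (h : Nat.card α < Nat.card β * n) : ∃ b, (f ⁻¹' {b}).ncard < n := by
  classical
  have := Fintype.ofFinite α
  have := Fintype.ofFinite β
  rw [Nat.card_eq_fintype_card, Nat.card_eq_fintype_card] at h
  obtain ⟨b, hb⟩ := Fintype.exists_card_fiber_lt_of_card_lt_mul (f := f) h
  refine ⟨b, ?_⟩
  rwa [← Set.ncard_coe_finset, Finset.coe_filter_univ] at hb

section Blocking

variable {F : Type*} [Field F]

lemma mem_projLine_iff_orthogonal {a : Fin 3 → F} (ha : a ≠ 0) (P : ℙ F (Fin 3 → F)) :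
    P ∈ projLine F a ↔ (mk F a ha).orthogonal P := by
  conv_rhs => rw [← P.mk_rep]
  exact (orthogonal_mk ha P.rep_nonzero).symm

lemma IsBlockingSet.exists_mem_orthogonal {S : Set (ℙ F (Fin 3 → F))} (hS : IsBlockingSet F S)
    (ℓ : ℙ F (Fin 3 → F)) : ∃ Q ∈ S, ℓ.orthogonal Q := by
  obtain ⟨Q, hQS, hQℓ⟩ := hS ℓ.rep ℓ.rep_nonzero
  rw [mem_projLine_iff_orthogonal ℓ.rep_nonzero, mk_rep] at hQℓ
  exact ⟨Q, hQS, hQℓ⟩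

variable [Fintype F]

lemma IsBlockingSet.ncard_setOf_orthogonal_le {S : Set (ℙ F (Fin 3 → F))}
    (hS : IsBlockingSet F S) {p : ℙ F (Fin 3 → F)} (hp : p ∉ S) :
    {ℓ : ℙ F (Fin 3 → F) | ℓ.orthogonal p}.ncard ≤ S.ncard := by
  classical
  choose Q hQS hQ using hS.exists_mem_orthogonal
  have hQ_eq_cross : ∀ ℓ : ℙ F (Fin 3 → F), ℓ.orthogonal p → ℓ = cross p (Q ℓ) := fun ℓ hℓ =>
    eq_cross_of_orthogonal (fun h => hp (h ▸ hQS ℓ)) hℓ (hQ ℓ)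
  refine Set.ncard_le_ncard_of_injOn Q (fun ℓ _ => hQS ℓ) (fun ℓ hℓ ℓ' hℓ' h => ?_) S.toFinite
  rw [hQ_eq_cross ℓ hℓ, hQ_eq_cross ℓ' hℓ', h]

theorem not_isBlockingSet_of_ncard_le {S : Set (ℙ F (Fin 3 → F))}
    (hS : S.ncard ≤ Fintype.card F) : ¬ IsBlockingSet F S := by
  intro hB
  obtain ⟨p, hp⟩ : ∃ p, p ∉ S := by
    by_contra! h
    rw [Set.eq_univ_of_forall h, Set.ncard_univ, card_fin_three_fun] at hS
    nlinarith
  have := le_ncard_setOf_orthogonal p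
  have := hB.ncard_setOf_orthogonal_le hp
  omega

end Blocking

section Pencil

variable {F : Type*} [Field F] {P₁ P₂ : MvPolynomial (Fin 3) F}

noncomputable def pencilParameter
    (hbase : ∀ v : Fin 3 → F, v ≠ 0 → ¬(eval v P₁ = 0 ∧ eval v P₂ = 0))
    (P : ℙ F (Fin 3 → F)) : ℙ F (Fin 2 → F) :=
  mk F ![eval P.rep P₂, -eval P.rep P₁] fun h => hbase P.rep P.rep_nonzero <| by
    simpa [Matrix.cons_eq_zero_iff, and_comm] using h

lemma pencilMember_eq_preimage
    (hbase : ∀ v : Fin 3 → F, v ≠ 0 → ¬(eval v P₁ = 0 ∧ eval v P₂ = 0))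
    (st : ℙ F (Fin 2 → F)) :
    pencilMember F P₁ P₂ st = pencilParameter hbase ⁻¹' {st} := by
  ext P
  rw [Set.mem_preimage, Set.mem_singleton_iff]
  conv_rhs => rw [← st.mk_rep]
  rw [pencilParameter, mk_eq_mk_iff_mul_eq_mul]
  simp only [pencilMember, Set.mem_ofPred_eq, Matrix.cons_val_zero, Matrix.cons_val_one]
  constructor <;> intro h <;> linear_combination h

end Pencil

theorem stmt_7_general (F : Type*) [Field F] [Fintype F]
    (P₁ P₂ : MvPolynomial (Fin 3) F)
    (hbase : ∀ v : Fin 3 → F, v ≠ 0 → ¬(eval v P₁ = 0 ∧ eval v P₂ = 0)) :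
    ∃ st : Projectivization F (Fin 2 → F),
      (pencilMember F P₁ P₂ st).ncard ≤ Fintype.card F ∧
      ¬ IsBlockingSet F (pencilMember F P₁ P₂ st) := by
  obtain ⟨st, hst⟩ := Finite.exists_ncard_preimage_lt_of_card_lt_mul (pencilParameter hbase)
    (n := Fintype.card F + 1)
    (by rw [card_fin_three_fun, card_fin_two_fun]; nlinarith [Fintype.card_pos (α := F)])
  rw [← pencilMember_eq_preimage hbase, Nat.lt_succ_iff] at hst
  exact ⟨st, hst, not_isBlockingSet_of_ncard_le hst⟩

/-- **Averaging argument.** A pencil with no `F_q`-points in its base locus has a member with at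
most `q` rational points; in particular this member is nonblocking. -/
theorem stmt_7 (F : Type*) [Field F] [Fintype F] (d : ℕ)
    (P₁ P₂ : MvPolynomial (Fin 3) F)
    (h₁ : P₁.IsHomogeneous d) (h₂ : P₂.IsHomogeneous d)
    (hbase : ∀ v : Fin 3 → F, v ≠ 0 → ¬(eval v P₁ = 0 ∧ eval v P₂ = 0)) :
    ∃ st : Projectivization F (Fin 2 → F),
      (pencilMember F P₁ P₂ st).ncard ≤ Fintype.card F ∧
      ¬ IsBlockingSet F (pencilMember F P₁ P₂ st) :=
  stmt_7_general F P₁ P₂ hbase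
end

section
/- Let q be a prime power and let s ≥ 0 be a real number such that every nontrivial blocking set in ℙ²(F_q) has at least q+1+s points. Let F, G ∈ F_q[x,y,z] be two homogeneous polynomials of the same degree with no common zero v ≠ 0 in F_q³, and suppose that no F_q-member C_{[s:t]} of the pencil has C_{[s:t]}(F_q) containing all q+1 points of some F_q-line. Then the number m of points [s:t] ∈ ℙ¹(F_q) for which C_{[s:t]}(F_q) is a blocking set satisfies m·(q+1+s) ≤ q²+q+1. -/
/-!
Distinct members of the pencil have disjoint sets of `F_q`-points: a common point `P` would give a
nonzero vector `(F(P), G(P))` orthogonal to two independent vectors of `F_q²`, forcing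
`F(P) = G(P) = 0`, i.e. a base point. So the blocking members are disjoint subsets of `ℙ²(F_q)`,
each of size at least `q + 1 + s`, and together they have at most `q² + q + 1` points.
-/

open MvPolynomial

open scoped LinearAlgebra.Projectivization

namespace Projectivization

variable {K : Type*} [Field K]

theorem eq_of_rep_dotProduct_eq_zero {u v : ℙ K (Fin 2 → K)} {w : Fin 2 → K} (hw : w ≠ 0)
    (hu : u.rep ⬝ᵥ w = 0) (hv : v.rep ⬝ᵥ w = 0) : u = v := by
  by_contra huv
  have hind : LinearIndependent K (Matrix.of ![u.rep, v.rep]).row := by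
    have := (independent_pair_iff_ne u v).2 huv
    rw [independent_iff] at this
    have hrow : (Matrix.of ![u.rep, v.rep]).row = Projectivization.rep ∘ ![u, v] := by
      ext i : 1
      fin_cases i <;> rfl
    rw [hrow]
    exact this
  have hunit := Matrix.linearIndependent_rows_iff_isUnit.1 hind
  refine hw (Matrix.mulVec_injective_iff_isUnit.2 hunit ?_)
  ext i
  fin_cases i <;> simp [Matrix.mulVec, hu, hv]

theorem card_of_finrank_three [Finite K] {V : Type*} [AddCommGroup V] [Module K V]
    (h : Module.finrank K V = 3) :
    Nat.card (ℙ K V) = Nat.card K ^ 2 + Nat.card K + 1 := by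
  rw [card_of_finrank K V h]
  simp only [Finset.sum_range_succ, Finset.range_one, Finset.sum_singleton, pow_zero, pow_one]
  ring

end Projectivization

theorem ncard_mul_le_card_of_pairwiseDisjoint {ι α : Type*} [Finite ι] [Finite α] {S : Set ι}
    {C : ι → Set α} (hC : S.PairwiseDisjoint C) {k : ℝ} (hk : ∀ i ∈ S, k ≤ (C i).ncard) :
    S.ncard * k ≤ Nat.card α := by
  classical
  have := Fintype.ofFinite ι
  have := Fintype.ofFinite α
  have hdisj : (S.toFinset : Set ι).PairwiseDisjoint fun i => (C i).toFinset := by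
    simpa [Set.PairwiseDisjoint, Set.Pairwise, Function.onFun] using hC
  calc S.ncard * k = ∑ _i ∈ S.toFinset, k := by
        rw [Finset.sum_const, nsmul_eq_mul, Set.ncard_eq_toFinset_card']
    _ ≤ ∑ i ∈ S.toFinset, ((C i).toFinset.card : ℝ) :=
        Finset.sum_le_sum fun i hi => by
          simpa [Set.ncard_eq_toFinset_card'] using hk i (Set.mem_toFinset.1 hi)
    _ = (S.toFinset.biUnion fun i => (C i).toFinset).card := by
        rw [Finset.card_biUnion hdisj, Nat.cast_sum]
    _ ≤ Nat.card α := by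
        rw [Nat.card_eq_fintype_card]
        exact_mod_cast Finset.card_le_univ _

theorem mem_pencilMember_iff {F : Type*} [Field F] {P₁ P₂ : MvPolynomial (Fin 3) F}
    {st : ℙ F (Fin 2 → F)} {P : ℙ F (Fin 3 → F)} :
    P ∈ pencilMember F P₁ P₂ st ↔ st.rep ⬝ᵥ ![eval P.rep P₁, eval P.rep P₂] = 0 := by
  simp [pencilMember, dotProduct, Fin.sum_univ_two]

open Function in
theorem pencilMember_pairwiseDisjoint {F : Type*} [Field F] {P₁ P₂ : MvPolynomial (Fin 3) F}
    (hbase : ∀ v : Fin 3 → F, v ≠ 0 → ¬(eval v P₁ = 0 ∧ eval v P₂ = 0)) :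
    Pairwise (Disjoint on pencilMember F P₁ P₂) := by
  intro st st' hne
  refine Set.disjoint_left.2 fun P hP hP' => hne ?_
  refine Projectivization.eq_of_rep_dotProduct_eq_zero ?_ (mem_pencilMember_iff.1 hP)
    (mem_pencilMember_iff.1 hP')
  intro h
  exact hbase P.rep P.rep_nonzero ⟨congr_fun h 0, congr_fun h 1⟩

theorem stmt_14_general (F : Type*) [Field F] [Fintype F] (s : ℝ)
    (hblocking : ∀ B : Set (Projectivization F (Fin 3 → F)),
      IsBlockingSet F B →
      (¬ ∃ a : Fin 3 → F, a ≠ 0 ∧ projLine F a ⊆ B) →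
      (Fintype.card F + 1 + s : ℝ) ≤ B.ncard)
    (P₁ P₂ : MvPolynomial (Fin 3) F)
    (hbase : ∀ v : Fin 3 → F, v ≠ 0 → ¬(eval v P₁ = 0 ∧ eval v P₂ = 0))
    (hnotriv : ∀ st : Projectivization F (Fin 2 → F),
      ¬ ∃ a : Fin 3 → F, a ≠ 0 ∧ projLine F a ⊆ pencilMember F P₁ P₂ st) :
    (({st : Projectivization F (Fin 2 → F) |
        IsBlockingSet F (pencilMember F P₁ P₂ st)}.ncard : ℝ)) *
      (Fintype.card F + 1 + s) ≤
      (Fintype.card F : ℝ) ^ 2 + Fintype.card F + 1 := by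
  have hcard : Nat.card (ℙ F (Fin 3 → F)) = Fintype.card F ^ 2 + Fintype.card F + 1 := by
    rw [Projectivization.card_of_finrank_three (by simp), Nat.card_eq_fintype_card]
  have hdisj := (pencilMember_pairwiseDisjoint hbase).set_pairwise
    {st | IsBlockingSet F (pencilMember F P₁ P₂ st)}
  exact_mod_cast hcard ▸ ncard_mul_le_card_of_pairwiseDisjoint hdisj
    fun st hst => hblocking _ hst (hnotriv st)

/-- **Counting argument in Proposition 3.2.** Suppose every nontrivial blocking set in
`ℙ²(F_q)` has at least `q+1+s` points. If no member of the pencil contains all points of a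
line, then the number `m` of blocking members satisfies `m(q+1+s) ≤ q²+q+1`. -/
theorem stmt_14 (F : Type*) [Field F] [Fintype F] (s : ℝ) (hs : 0 ≤ s)
    (hblocking : ∀ B : Set (Projectivization F (Fin 3 → F)),
      IsBlockingSet F B →
      (¬ ∃ a : Fin 3 → F, a ≠ 0 ∧ projLine F a ⊆ B) →
      (Fintype.card F + 1 + s : ℝ) ≤ B.ncard)
    (d : ℕ) (P₁ P₂ : MvPolynomial (Fin 3) F)
    (h₁ : P₁.IsHomogeneous d) (h₂ : P₂.IsHomogeneous d)
    (hbase : ∀ v : Fin 3 → F, v ≠ 0 → ¬(eval v P₁ = 0 ∧ eval v P₂ = 0))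
    (hnotriv : ∀ st : Projectivization F (Fin 2 → F),
      ¬ ∃ a : Fin 3 → F, a ≠ 0 ∧ projLine F a ⊆ pencilMember F P₁ P₂ st) :
    (({st : Projectivization F (Fin 2 → F) |
        IsBlockingSet F (pencilMember F P₁ P₂ st)}.ncard : ℝ)) *
      (Fintype.card F + 1 + s) ≤
      (Fintype.card F : ℝ) ^ 2 + Fintype.card F + 1 :=
  stmt_14_general F s hblocking P₁ P₂ hbase hnotriv
end

section
/- Let q be a prime power and let F, G ∈ F_q[x,y,z] be two homogeneous polynomials of the same degree with no common zero v ≠ 0 in F_q³. Suppose that for some [s₀:t₀] ∈ ℙ¹(F_q) the set C_{[s₀:t₀]}(F_q) contains all q+1 points of some F_q-line L. Then for every [s:t] ∈ ℙ¹(F_q) with [s:t] ≠ [s₀:t₀], the set C_{[s:t]}(F_q) is disjoint from L and hence is not a blocking set; in particular, at least q of the q+1 F_q-members of the pencil are nonblocking. -/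
/-!
Two distinct members `sF + tG` and `s'F + t'G` of a pencil can only meet in a common zero of
`F` and `G`, because `st' - ts' ≠ 0` makes the `2 × 2` system in `(F(v), G(v))` nondegenerate.
Without base points, every member other than the one containing `L` therefore misses `L`, and
`ℙ¹(F_q)` has `q + 1` points.
-/

open MvPolynomial

namespace Projectivization

open scoped LinearAlgebra.Projectivization

variable {K : Type*} [Field K]

theorem det_of_rep_ne_zero_of_ne {u v : ℙ K (Fin 2 → K)} (h : u ≠ v) :
    (Matrix.of ![u.rep, v.rep]).det ≠ 0 := by
  have hind := independent_iff.mp ((independent_pair_iff_ne u v).mpr h)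
  have hrows : Projectivization.rep ∘ ![u, v] = (Matrix.of ![u.rep, v.rep]).row := by
    ext i : 1; fin_cases i <;> rfl
  rw [hrows, Matrix.linearIndependent_rows_iff_isUnit, Matrix.isUnit_iff_isUnit_det] at hind
  exact hind.ne_zero

theorem ncard_compl_singleton_of_fin_two [Finite K] (x : ℙ K (Fin 2 → K)) :
    ({x}ᶜ : Set (ℙ K (Fin 2 → K))).ncard = Nat.card K := by
  have hcard : Nat.card (ℙ K (Fin 2 → K)) = Nat.card K + 1 :=
    card_of_finrank_two K _ (Module.finrank_fin_fun K)
  have := Set.ncard_add_ncard_compl ({x} : Set (ℙ K (Fin 2 → K)))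
  rw [Set.ncard_singleton, hcard] at this
  omega

end Projectivization

theorem disjoint_pencilMember {F : Type*} [Field F] {P₁ P₂ : MvPolynomial (Fin 3) F}
    (hbase : ∀ v : Fin 3 → F, v ≠ 0 → ¬(eval v P₁ = 0 ∧ eval v P₂ = 0))
    {st st' : Projectivization F (Fin 2 → F)} (h : st ≠ st') :
    Disjoint (pencilMember F P₁ P₂ st) (pencilMember F P₁ P₂ st') := by
  refine Set.disjoint_left.mpr fun P hP hP' => hbase P.rep P.rep_nonzero ?_
  have hzero := Matrix.eq_zero_of_mulVec_eq_zero (Projectivization.det_of_rep_ne_zero_of_ne h)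
    (v := ![eval P.rep P₁, eval P.rep P₂]) (by
      ext i; fin_cases i
      · simpa [Matrix.mulVec, dotProduct, Fin.sum_univ_two, pencilMember] using hP
      · simpa [Matrix.mulVec, dotProduct, Fin.sum_univ_two, pencilMember] using hP')
  exact ⟨congrFun hzero 0, congrFun hzero 1⟩

theorem not_isBlockingSet_of_disjoint_projLine {F : Type*} [Field F]
    {B : Set (Projectivization F (Fin 3 → F))} {a : Fin 3 → F} (ha : a ≠ 0)
    (h : Disjoint B (projLine F a)) : ¬ IsBlockingSet F B :=
  fun hB => (hB a ha).ne_empty (Set.disjoint_iff_inter_eq_empty.mp h)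

theorem stmt_15_general (F : Type*) [Field F] [Fintype F]
    (P₁ P₂ : MvPolynomial (Fin 3) F)
    (hbase : ∀ v : Fin 3 → F, v ≠ 0 → ¬(eval v P₁ = 0 ∧ eval v P₂ = 0))
    (st₀ : Projectivization F (Fin 2 → F)) (a : Fin 3 → F) (ha : a ≠ 0)
    (hL : projLine F a ⊆ pencilMember F P₁ P₂ st₀) :
    (∀ st : Projectivization F (Fin 2 → F), st ≠ st₀ →
      Disjoint (pencilMember F P₁ P₂ st) (projLine F a) ∧
      ¬ IsBlockingSet F (pencilMember F P₁ P₂ st)) ∧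
    Fintype.card F ≤
      {st : Projectivization F (Fin 2 → F) |
        ¬ IsBlockingSet F (pencilMember F P₁ P₂ st)}.ncard := by
  have hother : ∀ st : Projectivization F (Fin 2 → F), st ≠ st₀ →
      Disjoint (pencilMember F P₁ P₂ st) (projLine F a) ∧
      ¬ IsBlockingSet F (pencilMember F P₁ P₂ st) := fun st hst =>
    have hdisj := (disjoint_pencilMember hbase hst).mono_right hL
    ⟨hdisj, not_isBlockingSet_of_disjoint_projLine ha hdisj⟩
  refine ⟨hother, ?_⟩
  rw [Fintype.card_eq_nat_card, ← Projectivization.ncard_compl_singleton_of_fin_two st₀]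
  exact Set.ncard_le_ncard fun st hst => (hother st hst).2

/-- **Trivially blocking member forces the rest to be nonblocking.** If one member of the
pencil contains all `q+1` points of a line `L`, every other member is disjoint from `L`, hence
nonblocking; in particular at least `q` of the `q+1` members are nonblocking. -/
theorem stmt_15 (F : Type*) [Field F] [Fintype F] (d : ℕ)
    (P₁ P₂ : MvPolynomial (Fin 3) F)
    (h₁ : P₁.IsHomogeneous d) (h₂ : P₂.IsHomogeneous d)
    (hbase : ∀ v : Fin 3 → F, v ≠ 0 → ¬(eval v P₁ = 0 ∧ eval v P₂ = 0))
    (st₀ : Projectivization F (Fin 2 → F)) (a : Fin 3 → F) (ha : a ≠ 0)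
    (hL : projLine F a ⊆ pencilMember F P₁ P₂ st₀) :
    (∀ st : Projectivization F (Fin 2 → F), st ≠ st₀ →
      Disjoint (pencilMember F P₁ P₂ st) (projLine F a) ∧
      ¬ IsBlockingSet F (pencilMember F P₁ P₂ st)) ∧
    Fintype.card F ≤
      {st : Projectivization F (Fin 2 → F) |
        ¬ IsBlockingSet F (pencilMember F P₁ P₂ st)}.ncard :=
  stmt_15_general F P₁ P₂ hbase st₀ a ha hL
end

section
/- Let q be a prime power and suppose U_1, ..., U_{q+1} are subsets of ℙ²(F_q) whose union is all of ℙ²(F_q) and which satisfy U_i ∩ U_j = B for all i ≠ j, where B = ∩_{k=1}^{q+1} U_k. Then there exist homogeneous polynomials F, G ∈ F_q[x,y,z] of the same degree and an enumeration C_1, ..., C_{q+1} of the F_q-members of the pencil generated by F and G (i.e., of the sets {[v] ∈ ℙ²(F_q) : sF(v)+tG(v)=0} for [s:t] ∈ ℙ¹(F_q)) such that C_i(F_q) = U_i for each 1 ≤ i ≤ q+1. -/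
open MvPolynomial

/-!
Over a finite field every function on `ℙⁿ(F_q)`, read on fixed representatives of the points, is
the evaluation of a homogeneous polynomial of degree `#ℙⁿ(F_q) - 1`: up to a scalar, the indicator
of a point is the product of linear forms, one through each other point, none through it.
Enumerate `ℙ¹(F_q)` as `[sᵢ:tᵢ]` and choose `P₁, P₂` vanishing on `B` and with
`(P₁, P₂)(Q) = (tⱼ, -sⱼ)` when `Q ∈ Uⱼ \ B`. Then `sᵢ P₁ + tᵢ P₂` vanishes at such a `Q` iff the
determinant of `[sᵢ:tᵢ]` and `[sⱼ:tⱼ]` does, i.e. iff `i = j`, which by the intersection hypothesis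
is iff `Q ∈ Uᵢ`.
-/

open scoped LinearAlgebra.Projectivization

namespace Projectivization

variable {K V : Type*} [Field K] [AddCommGroup V] [Module K V]

lemma exists_dual_apply_rep_ne_zero_of_ne {Q Q' : ℙ K V} (hne : Q ≠ Q') :
    ∃ f : Module.Dual K V, f Q.rep ≠ 0 ∧ f Q'.rep = 0 := by
  have hQ : Q.rep ∉ K ∙ Q'.rep := by
    rw [Submodule.mem_span_singleton]
    rintro ⟨c, hc⟩
    apply hne
    rw [← mk_rep Q, ← mk_rep Q', mk_eq_mk_iff']
    exact ⟨c, hc⟩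
  obtain ⟨f, hfQ, hmap⟩ := Submodule.exists_dual_map_eq_bot_of_notMem hQ inferInstance
  refine ⟨f, hfQ, ?_⟩
  simpa [hmap] using Submodule.mem_map_of_mem (f := f) (Submodule.mem_span_singleton_self Q'.rep)

lemma det_rep_eq_zero_iff (P Q : ℙ K (Fin 2 → K)) :
    P.rep 0 * Q.rep 1 - P.rep 1 * Q.rep 0 = 0 ↔ P = Q := by
  have hrows : Projectivization.rep ∘ ![P, Q] = (Matrix.of ![P.rep, Q.rep]).row := by
    ext i : 1; fin_cases i <;> rfl
  rw [← not_iff_not, ← ne_eq P Q, ← independent_pair_iff_ne, independent_iff, hrows,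
    Matrix.linearIndependent_rows_iff_isUnit, Matrix.isUnit_iff_isUnit_det, isUnit_iff_ne_zero,
    Matrix.det_fin_two]
  rfl

end Projectivization

namespace MvPolynomial

variable {K σ : Type*} [Field K] [Fintype σ] [DecidableEq σ]

noncomputable def ofDual (f : Module.Dual K (σ → K)) : MvPolynomial σ K :=
  ∑ i, C (f (Pi.single i 1)) * X i

lemma eval_ofDual (f : Module.Dual K (σ → K)) (v : σ → K) : eval v (ofDual f) = f v := by
  conv_rhs => rw [← Finset.univ_sum_single v, map_sum]
  simp only [ofDual, map_sum, map_mul, eval_C, eval_X]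
  refine Finset.sum_congr rfl fun i _ => ?_
  rw [mul_comm, ← smul_eq_mul, ← map_smul, ← Pi.single_smul', smul_eq_mul, mul_one]

lemma isHomogeneous_ofDual (f : Module.Dual K (σ → K)) : (ofDual f).IsHomogeneous 1 :=
  IsHomogeneous.sum _ _ _ fun i _ => isHomogeneous_C_mul_X _ i

lemma exists_isHomogeneous_eval_rep_eq_one_and_eq_zero [Finite (ℙ K (σ → K))] (Q : ℙ K (σ → K)) :
    ∃ χ : MvPolynomial σ K, χ.IsHomogeneous (Nat.card (ℙ K (σ → K)) - 1) ∧
      eval Q.rep χ = 1 ∧ ∀ Q' ≠ Q, eval Q'.rep χ = 0 := by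
  classical
  have : Fintype (ℙ K (σ → K)) := Fintype.ofFinite _
  choose! f hfQ hfQ' using fun Q' (h : Q' ≠ Q) =>
    Projectivization.exists_dual_apply_rep_ne_zero_of_ne h.symm
  let g : MvPolynomial σ K := ∏ Q' ∈ Finset.univ.erase Q, ofDual (f Q')
  have hg : g.IsHomogeneous (Nat.card (ℙ K (σ → K)) - 1) := by
    simpa [Nat.card_eq_fintype_card] using
      IsHomogeneous.prod (Finset.univ.erase Q) _ (fun _ => 1) fun Q' _ =>
        isHomogeneous_ofDual (f Q')
  have hgQ : eval Q.rep g ≠ 0 := by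
    simp only [g, map_prod, eval_ofDual]
    exact Finset.prod_ne_zero_iff.2 fun Q' hQ' => hfQ Q' (Finset.ne_of_mem_erase hQ')
  refine ⟨C (eval Q.rep g)⁻¹ * g, hg.C_mul _, by simp [hgQ], fun Q' hQ' => ?_⟩
  have hgQ' : eval Q'.rep g = 0 := by
    simp only [g, map_prod, eval_ofDual]
    exact Finset.prod_eq_zero (Finset.mem_erase.2 ⟨hQ', Finset.mem_univ _⟩) (hfQ' Q' hQ')
  simp [hgQ']

lemma exists_isHomogeneous_eval_rep_eq [Finite (ℙ K (σ → K))] (g : ℙ K (σ → K) → K) :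
    ∃ P : MvPolynomial σ K, P.IsHomogeneous (Nat.card (ℙ K (σ → K)) - 1) ∧
      ∀ Q, eval Q.rep P = g Q := by
  classical
  have : Fintype (ℙ K (σ → K)) := Fintype.ofFinite _
  choose χ hχ hχQ hχQ' using exists_isHomogeneous_eval_rep_eq_one_and_eq_zero (K := K) (σ := σ)
  refine ⟨∑ Q, C (g Q) * χ Q, IsHomogeneous.sum _ _ _ fun Q _ => (hχ Q).C_mul _, fun Q => ?_⟩
  rw [map_sum, Finset.sum_eq_single Q (fun Q' _ hQ' => by simp [hχQ' Q' Q hQ'.symm]) (by simp)]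
  simp [hχQ]

end MvPolynomial

lemma Set.mem_iff_mem_iInter_or_eq_of_inter_eq_iInter {ι α : Type*} {U : ι → Set α}
    (hinter : ∀ i j, i ≠ j → U i ∩ U j = ⋂ k, U k) {x : α} {j : ι} (hx : x ∈ U j) (i : ι) :
    x ∈ U i ↔ x ∈ ⋂ k, U k ∨ i = j := by
  refine ⟨fun hi => or_iff_not_imp_right.2 fun hij => hinter i j hij ▸ ⟨hi, hx⟩, ?_⟩
  rintro (hB | rfl)
  · exact Set.mem_iInter.1 hB i
  · exact hx

/-- **Remark 2.5 (generalized realization).** If `U_1, …, U_{q+1}` cover `ℙ²(F_q)` and any two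
of them intersect exactly in `B = ∩ U_k`, then there is a pencil whose `F_q`-members have
point sets exactly `U_1, …, U_{q+1}`. -/
theorem stmt_16 (F : Type*) [Field F] [Fintype F]
    (U : Fin (Fintype.card F + 1) → Set (Projectivization F (Fin 3 → F)))
    (hcover : (⋃ i, U i) = Set.univ)
    (hinter : ∀ i j, i ≠ j → U i ∩ U j = ⋂ k, U k) :
    ∃ (d : ℕ) (P₁ P₂ : MvPolynomial (Fin 3) F)
      (e : Fin (Fintype.card F + 1) ≃ Projectivization F (Fin 2 → F)),
      P₁.IsHomogeneous d ∧ P₂.IsHomogeneous d ∧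
      ∀ i, pencilMember F P₁ P₂ (e i) = U i := by
  classical
  have hcard : Fintype.card F + 1 = Nat.card (ℙ F (Fin 2 → F)) := by
    rw [Projectivization.card_of_finrank_two F _ (Module.finrank_fin_fun F),
      Nat.card_eq_fintype_card]
  let e := (finCongr hcard).trans (Finite.equivFin (ℙ F (Fin 2 → F))).symm
  choose idx hidx using fun Q => Set.mem_iUnion.1 (hcover ▸ Set.mem_univ Q)
  let B := ⋂ k, U k
  -- at `Q ∉ B`, the member `[s:t]` evaluates to `s t' - t s'` where `[s':t'] = e (idx Q)`
  obtain ⟨P₁, hP₁, hP₁Q⟩ := MvPolynomial.exists_isHomogeneous_eval_rep_eq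
    fun Q => if Q ∈ B then 0 else (e (idx Q)).rep 1
  obtain ⟨P₂, hP₂, hP₂Q⟩ := MvPolynomial.exists_isHomogeneous_eval_rep_eq
    fun Q => if Q ∈ B then 0 else -(e (idx Q)).rep 0
  refine ⟨_, P₁, P₂, e, hP₁, hP₂, fun i => Set.ext fun Q => ?_⟩
  rw [Set.mem_iff_mem_iInter_or_eq_of_inter_eq_iInter hinter (hidx Q) i]
  show (e i).rep 0 * eval Q.rep P₁ + (e i).rep 1 * eval Q.rep P₂ = 0 ↔ Q ∈ B ∨ i = idx Q
  rw [hP₁Q, hP₂Q]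
  split_ifs with hQB
  · exact iff_of_true (by ring) (Or.inl hQB)
  · rw [mul_neg, ← sub_eq_add_neg, Projectivization.det_rep_eq_zero_iff, e.apply_eq_iff_eq]
    exact (or_iff_right hQB).symm
end
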